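/- arXiv:1302.4190 — 3 statements merged into one kernel-verified Lean document; each statement's English description precedes it below -/
import Mathlib

section
/- Let (G, τ) be a Hausdorff ω-narrow first-countable SIN paratopological group. Then there exist a second-countable metrizable topological group H and a continuous bijective group homomorphism from G onto H. -/
open Topology Pointwise

/-- A continuous bijective group homomorphism from `G` onto a second-countable
metrizable topological group. -/
structure ContinuousIsoOntoSecondCountableMetrizableGroup
    (G : Type*) [Group G] [TopologicalSpace G] where
  H : Type*
  [group : Group H]
  [top : TopologicalSpace H]
  secondCountable : SecondCountableTopology H
  metrizable : TopologicalSpace.MetrizableSpace H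
  topologicalGroup : IsTopologicalGroup H
  φ : G →* H
  continuous : Continuous φ
  bijective : Function.Bijective φ

/-!
If `G` is SIN, the sets `U / U = U U⁻¹` with `U ∈ 𝓝 1` form a base at `1` of a group topology
`τ♯` coarser than `τ`; invariance is what makes `U U⁻¹ U U⁻¹` small again. `τ♯` inherits the
Hausdorff property and first countability from `τ`, and it is separable: if `G = F_n U_n` with
`F_n` countable for a countable base `(U_n)` at `1`, then `⋃ F_n` is dense, since `x ∈ f u` gives
`f ∈ x U⁻¹`. By Birkhoff–Kakutani `τ♯` is metrizable, hence second-countable, and the identity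
`(G, τ) → (G, τ♯)` is the required homomorphism.
-/

open Filter Set TopologicalSpace

universe v

class IsSIN (G : Type*) [Group G] [TopologicalSpace G] : Prop where
  exists_nhds_conj_mem :
    ∀ U ∈ 𝓝 (1 : G), ∃ V ∈ 𝓝 (1 : G), ∀ x : G, ∀ v ∈ V, x * v * x⁻¹ ∈ U

section Paratopological

variable {G : Type*} [Group G] [TopologicalSpace G]

theorem exists_mem_nhds_one_notMem_div_self [ContinuousMul G] [T2Space G] {x : G} (hx : x ≠ 1) :
    ∃ U ∈ 𝓝 (1 : G), x ∉ U / U := by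
  obtain ⟨A, C, hA, hC, hxA, h1C, hAC⟩ := t2_separation hx
  have hxA' : (x * ·) ⁻¹' A ∈ 𝓝 (1 : G) :=
    (continuous_const_mul x).tendsto' 1 x (mul_one x) (hA.mem_nhds hxA)
  refine ⟨_, inter_mem hxA' (hC.mem_nhds h1C), ?_⟩
  rintro ⟨u, hu, v, hv, rfl⟩
  exact hAC.le_bot ⟨by simpa using hv.1, hu.2⟩

theorem exists_countable_forall_exists_inv_mul_mem [(𝓝 (1 : G)).IsCountablyGenerated]
    (hnarrow : ∀ U ∈ 𝓝 (1 : G), ∃ F : Set G, F.Countable ∧ univ ⊆ F * U) :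
    ∃ D : Set G, D.Countable ∧
      ∀ x, ∀ U ∈ 𝓝 (1 : G), ∃ d ∈ D, d⁻¹ * x ∈ U := by
  obtain ⟨u, hu⟩ := (𝓝 (1 : G)).exists_antitone_basis
  choose F hFc hF using fun n => hnarrow (u n) (hu.mem n)
  refine ⟨⋃ n, F n, countable_iUnion hFc, fun x U hU => ?_⟩
  obtain ⟨n, hn⟩ := hu.mem_iff.1 hU
  obtain ⟨f, hf, v, hv, rfl⟩ := hF n (mem_univ x)
  exact ⟨f, mem_iUnion_of_mem n hf, hn (by simpa using hv)⟩

end Paratopological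

namespace IsSIN

variable {G : Type*} [Group G] [TopologicalSpace G] [IsSIN G]

theorem exists_mem_nhds_div_self_mul_subset [ContinuousMul G] {U : Set G}
    (hU : U ∈ 𝓝 (1 : G)) : ∃ V ∈ 𝓝 (1 : G), V / V * (V / V) ⊆ U / U := by
  obtain ⟨W₀, hW₀, hmul⟩ := exists_nhds_one_split hU
  obtain ⟨W, hW, hconj⟩ := exists_nhds_conj_mem W₀ hW₀
  refine ⟨W ∩ W₀, inter_mem hW hW₀, ?_⟩
  rintro _ ⟨_, ⟨a, ha, b, hb, rfl⟩, _, ⟨c, hc, d, hd, rfl⟩, rfl⟩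
  -- `a b⁻¹ c d⁻¹ = (a (b⁻¹ c b)) (d b)⁻¹`
  exact ⟨_, hmul _ ha.2 _ (hconj b⁻¹ c hc.1), _, hmul _ hd.2 _ hb.2,
    by simp only [div_eq_mul_inv]; group⟩

theorem exists_mem_nhds_conj_div_self_subset (x : G) {U : Set G} (hU : U ∈ 𝓝 (1 : G)) :
    ∃ V ∈ 𝓝 (1 : G), ∀ g ∈ V / V, x * g * x⁻¹ ∈ U / U := by
  obtain ⟨V, hV, hconj⟩ := exists_nhds_conj_mem U hU
  refine ⟨V, hV, ?_⟩
  rintro _ ⟨a, ha, b, hb, rfl⟩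
  exact ⟨_, hconj x a ha, _, hconj x b hb, by simp only [div_eq_mul_inv]; group⟩

variable (G) [ContinuousMul G]

@[reducible] def nhdsDivGroupFilterBasis : GroupFilterBasis G where
  sets := (fun U => U / U) '' {U | U ∈ 𝓝 (1 : G)}
  nonempty := ⟨_, univ, univ_mem, rfl⟩
  inter_sets := by
    rintro _ _ ⟨U, hU, rfl⟩ ⟨V, hV, rfl⟩
    exact ⟨_, ⟨U ∩ V, inter_mem hU hV, rfl⟩, subset_inter
      (div_subset_div inter_subset_left inter_subset_left)
      (div_subset_div inter_subset_right inter_subset_right)⟩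
  one' := by
    rintro _ ⟨U, hU, rfl⟩
    exact ⟨1, mem_of_mem_nhds hU, 1, mem_of_mem_nhds hU, div_one 1⟩
  mul' := by
    rintro _ ⟨U, hU, rfl⟩
    obtain ⟨V, hV, hVU⟩ := exists_mem_nhds_div_self_mul_subset hU
    exact ⟨_, ⟨V, hV, rfl⟩, hVU⟩
  inv' := by
    rintro _ ⟨U, hU, rfl⟩
    refine ⟨_, ⟨U, hU, rfl⟩, ?_⟩
    rintro _ ⟨a, ha, b, hb, rfl⟩
    exact ⟨b, hb, a, ha, by simp⟩
  conj' x := by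
    rintro _ ⟨U, hU, rfl⟩
    obtain ⟨V, hV, hVU⟩ := exists_mem_nhds_conj_div_self_subset x hU
    exact ⟨_, ⟨V, hV, rfl⟩, hVU⟩

theorem nhdsDivGroupFilterBasis_filter : (nhdsDivGroupFilterBasis G).filter = 𝓝 1 / 𝓝 1 := by
  ext s
  simp only [FilterBasis.mem_filter_iff, Filter.mem_div]
  constructor
  · rintro ⟨_, ⟨U, hU, rfl⟩, hs⟩
    exact ⟨U, hU, U, hU, hs⟩
  · rintro ⟨U, hU, V, hV, hs⟩
    exact ⟨_, ⟨U ∩ V, inter_mem hU hV, rfl⟩,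
      (div_subset_div inter_subset_left inter_subset_right).trans hs⟩

end IsSIN

/-- `G` with the group topology `τ♯` whose neighbourhood filter at `1` is `𝓝 1 / 𝓝 1`. -/
def WithSharpTopology (G : Type*) := G

namespace WithSharpTopology

variable {G : Type*} [Group G]

instance : Group (WithSharpTopology G) := inferInstanceAs (Group G)

def toSharp : G ≃* WithSharpTopology G := MulEquiv.refl G

variable [TopologicalSpace G] [ContinuousMul G] [IsSIN G]

instance : TopologicalSpace (WithSharpTopology G) :=
  (IsSIN.nhdsDivGroupFilterBasis G).topology

instance : IsTopologicalGroup (WithSharpTopology G) :=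
  (IsSIN.nhdsDivGroupFilterBasis G).isTopologicalGroup

theorem nhds_toSharp (x : G) : 𝓝 (toSharp x) = map (toSharp ∘ (x * ·)) (𝓝 1 / 𝓝 1) := by
  rw [← IsSIN.nhdsDivGroupFilterBasis_filter]
  exact (IsSIN.nhdsDivGroupFilterBasis G).nhds_eq

theorem mem_nhds_toSharp {x : G} {s : Set (WithSharpTopology G)} :
    s ∈ 𝓝 (toSharp x) ↔
      ∃ U ∈ 𝓝 (1 : G), ∃ V ∈ 𝓝 (1 : G), ∀ u ∈ U, ∀ v ∈ V, toSharp (x * (u / v)) ∈ s := by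
  simp only [nhds_toSharp, mem_map, Filter.mem_div, div_subset_iff, mem_preimage,
    Function.comp_apply]

theorem continuous_toSharp : Continuous (toSharp : G → WithSharpTopology G) := by
  refine continuous_iff_continuousAt.2 fun x => ?_
  have h : 𝓝 (1 : G) ≤ 𝓝 1 / 𝓝 1 := by
    simpa using Filter.div_le_div_left (pure_le_nhds (1 : G)) (f := 𝓝 1)
  have hx : 𝓝 x = map (x * ·) (𝓝 1) := by
    simpa using ((Homeomorph.mulLeft x).map_nhds_eq 1).symm
  rw [ContinuousAt, nhds_toSharp, hx, tendsto_map'_iff]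
  exact tendsto_map.mono_left h

instance [T2Space G] : T2Space (WithSharpTopology G) := by
  refine IsTopologicalGroup.t2Space_of_one_sep fun x hx => ?_
  have hx' : toSharp.symm x ≠ 1 := hx
  obtain ⟨U, hU, hxU⟩ := exists_mem_nhds_one_notMem_div_self hx'
  refine ⟨toSharp.symm ⁻¹' (U / U), ?_, hxU⟩
  exact (mem_nhds_toSharp (G := G) (x := 1)).2
    ⟨U, hU, U, hU, fun u hu v hv => ⟨u, hu, v, hv, by simp⟩⟩

instance [(𝓝 (1 : G)).IsCountablyGenerated] :
    (𝓝 (1 : WithSharpTopology G)).IsCountablyGenerated := by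
  rw [← map_one toSharp, nhds_toSharp, ← map₂_div, ← map_prod_eq_map₂]
  infer_instance

theorem separableSpace
    (hD : ∃ D : Set G, D.Countable ∧
      ∀ x, ∀ U ∈ 𝓝 (1 : G), ∃ d ∈ D, d⁻¹ * x ∈ U) :
    SeparableSpace (WithSharpTopology G) := by
  obtain ⟨D, hDc, hD⟩ := hD
  refine ⟨⟨toSharp '' D, hDc.image _, fun x => mem_closure_iff_nhds.2 fun t ht => ?_⟩⟩
  obtain ⟨U, hU, V, hV, hUV⟩ := (mem_nhds_toSharp (G := G) (x := toSharp.symm x)).1 ht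
  obtain ⟨d, hd, hdV⟩ := hD (toSharp.symm x) V hV
  refine ⟨toSharp d, ?_, d, hd, rfl⟩
  simpa using hUV 1 (mem_of_mem_nhds hU) _ hdV

end WithSharpTopology

theorem IsTopologicalGroup.metrizableSpace_and_secondCountableTopology (K : Type*) [Group K]
    [TopologicalSpace K] [IsTopologicalGroup K] [T2Space K] [(𝓝 (1 : K)).IsCountablyGenerated]
    [SeparableSpace K] : MetrizableSpace K ∧ SecondCountableTopology K := by
  let := IsTopologicalGroup.rightUniformSpace K
  have : (uniformity K).IsCountablyGenerated := by
    rw [uniformity_eq_comap_nhds_one' K]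
    infer_instance
  exact ⟨UniformSpace.metrizableSpace, UniformSpace.secondCountable_of_separable K⟩

theorem small_of_metrizableSpace_of_secondCountableTopology (K : Type*) [TopologicalSpace K]
    [MetrizableSpace K] [SecondCountableTopology K] : Small.{v} K :=
  letI := metrizableSpaceMetric K
  small_of_injective (kuratowskiEmbedding.isometry K).injective

theorem ContinuousIsoOntoSecondCountableMetrizableGroup.nonempty_of_mulEquiv
    {G : Type*} [Group G] [TopologicalSpace G] {K : Type*} [Group K] [TopologicalSpace K]
    [IsTopologicalGroup K] [MetrizableSpace K] [SecondCountableTopology K] (e : G ≃* K) (he : Continuous e) :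
    Nonempty (ContinuousIsoOntoSecondCountableMetrizableGroup.{_, v} G) := by
  -- `H` may live in any universe, so `K` is transported to `Shrink.{v} K`.
  have : Small.{v} K := small_of_metrizableSpace_of_secondCountableTopology K
  let s : Shrink.{v} K ≃ₜ* K :=
    { Shrink.mulEquiv with
      continuous_toFun := (Shrink.homeomorph K).symm.continuous
      continuous_invFun := (Shrink.homeomorph K).continuous }
  let φ : G ≃* Shrink.{v} K := e.trans s.symm.toMulEquiv
  exact ⟨{ H := Shrink.{v} K
           secondCountable := s.toHomeomorph.secondCountableTopology
           metrizable := s.toHomeomorph.isEmbedding.metrizableSpace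
           topologicalGroup := s.isTopologicalGroup
           φ := φ.toMonoidHom
           continuous := s.symm.continuous.comp he
           bijective := φ.bijective }⟩

/-- Let `(G, τ)` be a Hausdorff ω-narrow first-countable SIN paratopological group.
Then there exist a second-countable metrizable topological group `H` and a continuous
bijective group homomorphism from `G` onto `H`. -/
theorem hausdorff_omegaNarrow_SIN_firstCountable_continuous_iso
    {G : Type*} [Group G] [TopologicalSpace G] [T2Space G] [ContinuousMul G]
    [FirstCountableTopology G]
    (hnarrow : ∀ U ∈ 𝓝 (1 : G), ∃ F : Set G, F.Countable ∧
      (Set.univ : Set G) ⊆ F * U ∧ (Set.univ : Set G) ⊆ U * F)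
    (hSIN : ∀ U ∈ 𝓝 (1 : G), ∃ V ∈ 𝓝 (1 : G), ∀ x : G, ∀ v ∈ V, x * v * x⁻¹ ∈ U) :
    Nonempty (ContinuousIsoOntoSecondCountableMetrizableGroup G) := by
  have : IsSIN G := ⟨hSIN⟩
  have := WithSharpTopology.separableSpace <| exists_countable_forall_exists_inv_mul_mem
    fun U hU => (hnarrow U hU).imp fun _ hF => ⟨hF.1, hF.2.1⟩
  obtain ⟨_, _⟩ :=
    IsTopologicalGroup.metrizableSpace_and_secondCountableTopology (WithSharpTopology G)
  exact ContinuousIsoOntoSecondCountableMetrizableGroup.nonempty_of_mulEquiv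
    WithSharpTopology.toSharp WithSharpTopology.continuous_toSharp
end

section
/- If (G, τ) is a Hausdorff saturated first-countable paratopological group, then G is submetrizable. -/
/-!
The sets `U * U⁻¹`, for `U` a neighbourhood of `1`, form a group filter basis: saturation is
exactly what makes `(V * V⁻¹) * (V * V⁻¹)` fit into `U * U⁻¹`, because a neighbourhood `V` of `1`
can be chosen with `V⁻¹ * V ⊆ S * S⁻¹` (translate an open subset of `S⁻¹` back to `1`).
The resulting group topology is coarser than the original one, first countable, and Hausdorff:
for `x ≠ 1` pick `U` with `x • U ∩ U = ∅`, then `x ∉ U * U⁻¹`. A Hausdorff first-countable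
topological group is metrizable.
-/

open Topology Pointwise Filter Set Uniformity

theorem GroupFilterBasis.metrizableSpace_topology {H : Type*} [Group H] (B : GroupFilterBasis H)
    [B.filter.IsCountablyGenerated] (hsep : ∀ x : H, x ≠ 1 → ∃ V ∈ B, x ∉ V) :
    @TopologicalSpace.MetrizableSpace H B.topology := by
  let := B.topology
  have : (𝓝 (1 : H)).IsCountablyGenerated := B.nhds_one_eq ▸ inferInstance
  have : T2Space H := IsTopologicalGroup.t2Space_of_one_sep fun x hx ↦
    let ⟨V, hV, hxV⟩ := hsep x hx
    ⟨V, B.mem_nhds_one hV, hxV⟩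
  let : UniformSpace H := IsTopologicalGroup.rightUniformSpace H
  have : (𝓤 H).IsCountablyGenerated := by
    rw [uniformity_eq_comap_nhds_one']
    infer_instance
  exact UniformSpace.metrizableSpace

theorem Set.preimage_mul_inv_subset {G H : Type*} [Group G] [Group H] (f : G →* H) (U : Set H) :
    f ⁻¹' U * (f ⁻¹' U)⁻¹ ⊆ f ⁻¹' (U * U⁻¹) := by
  rintro _ ⟨a, ha, b, hb, rfl⟩
  exact ⟨f a, ha, f b, by simpa using hb, (map_mul f a b).symm⟩

section Saturated

variable {G : Type*} [Group G] [TopologicalSpace G] [ContinuousMul G]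

theorem map_mul_left_nhds_one_of_continuousMul (x : G) : map (x * ·) (𝓝 1) = 𝓝 x := by
  simpa using (Homeomorph.mulLeft x).map_nhds_eq 1

theorem exists_nhds_one_inv_mul_subset_mul_inv
    (hsat : ∀ U ∈ 𝓝 (1 : G), (interior U⁻¹).Nonempty) {S : Set G} (hS : S ∈ 𝓝 1) :
    ∃ V ∈ 𝓝 (1 : G), V ⊆ S ∧ V⁻¹ * V ⊆ S * S⁻¹ := by
  obtain ⟨x, hx⟩ := hsat S hS
  have hT : x⁻¹ • interior S⁻¹ ∈ 𝓝 (1 : G) :=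
    (isOpen_interior.smul x⁻¹).mem_nhds (by simpa [mem_smul_set_iff_inv_smul_mem] using hx)
  refine ⟨S ∩ x⁻¹ • interior S⁻¹, inter_mem hS hT, inter_subset_left, ?_⟩
  rintro _ ⟨a, ha, b, hb, rfl⟩
  have hxa : x * a⁻¹ ∈ S⁻¹ := by
    simpa using interior_subset (mem_smul_set_iff_inv_smul_mem.1 (mem_inv.1 ha).2)
  have hxb : x * b ∈ S⁻¹ := by
    simpa using interior_subset (mem_smul_set_iff_inv_smul_mem.1 hb.2)
  exact ⟨a * x⁻¹, by simpa using hxa, x * b, hxb, by group⟩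

abbrev mulInvGroupFilterBasis (hsat : ∀ U ∈ 𝓝 (1 : G), (interior U⁻¹).Nonempty) :
    GroupFilterBasis G where
  sets := (fun U ↦ U * U⁻¹) '' (𝓝 (1 : G)).sets
  nonempty := ⟨_, mem_image_of_mem _ univ_mem⟩
  inter_sets := by
    rintro _ _ ⟨U₁, hU₁, rfl⟩ ⟨U₂, hU₂, rfl⟩
    exact ⟨_, mem_image_of_mem _ (inter_mem hU₁ hU₂),
      subset_inter (mul_subset_mul inter_subset_left (inv_subset_inv.2 inter_subset_left))
        (mul_subset_mul inter_subset_right (inv_subset_inv.2 inter_subset_right))⟩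
  one' := by
    rintro _ ⟨U, hU, rfl⟩
    exact subset_mul_left U (by simpa using mem_of_mem_nhds hU) (mem_of_mem_nhds hU)
  mul' := by
    rintro _ ⟨U, hU, rfl⟩
    obtain ⟨S, hSo, hS1, hSU⟩ := exists_open_nhds_one_mul_subset hU
    obtain ⟨V, hV, hVS, hVV⟩ := exists_nhds_one_inv_mul_subset_mul_inv hsat (hSo.mem_nhds hS1)
    refine ⟨_, mem_image_of_mem _ hV, ?_⟩
    calc V * V⁻¹ * (V * V⁻¹) = V * (V⁻¹ * V) * V⁻¹ := by simp only [mul_assoc]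
      _ ⊆ S * (S * S⁻¹) * S⁻¹ := mul_subset_mul (mul_subset_mul hVS hVV) (inv_subset_inv.2 hVS)
      _ = S * S * (S * S)⁻¹ := by simp only [mul_assoc, mul_inv_rev]
      _ ⊆ U * U⁻¹ := mul_subset_mul hSU (inv_subset_inv.2 hSU)
  inv' := by
    rintro _ ⟨U, hU, rfl⟩
    refine ⟨_, mem_image_of_mem _ hU, ?_⟩
    change _ ⊆ (U * U⁻¹)⁻¹
    rw [mul_inv_rev, inv_inv]
  conj' := by
    rintro x₀ _ ⟨U, hU, rfl⟩
    have hconj : Tendsto (MulAut.conj x₀) (𝓝 1) (𝓝 1) :=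
      ((continuous_const_mul x₀).mul continuous_const).tendsto' 1 1 (by simp)
    exact ⟨_, mem_image_of_mem _ (hconj hU),
      preimage_mul_inv_subset (MulAut.conj x₀).toMonoidHom U⟩

theorem mulInvGroupFilterBasis_filter_hasBasis
    (hsat : ∀ U ∈ 𝓝 (1 : G), (interior U⁻¹).Nonempty) {ι : Sort*} {p : ι → Prop}
    {s : ι → Set G} (hb : (𝓝 (1 : G)).HasBasis p s) :
    (mulInvGroupFilterBasis hsat).filter.HasBasis p fun i ↦ s i * (s i)⁻¹ := by
  refine ⟨fun W ↦ ⟨?_, ?_⟩⟩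
  · rintro ⟨_, ⟨U, hU, rfl⟩, hUW⟩
    obtain ⟨i, hi, hiU⟩ := hb.mem_iff.1 hU
    exact ⟨i, hi, (mul_subset_mul hiU (inv_subset_inv.2 hiU)).trans hUW⟩
  · rintro ⟨i, hi, hiW⟩
    exact (mulInvGroupFilterBasis hsat).mem_filter_iff.2
      ⟨_, mem_image_of_mem _ (hb.mem_of_mem hi), hiW⟩

theorem le_mulInvGroupFilterBasis_topology
    (hsat : ∀ U ∈ 𝓝 (1 : G), (interior U⁻¹).Nonempty) :
    ‹TopologicalSpace G› ≤ (mulInvGroupFilterBasis hsat).topology := by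
  have hle : 𝓝 (1 : G) ≤ (mulInvGroupFilterBasis hsat).filter :=
    (mulInvGroupFilterBasis_filter_hasBasis hsat (𝓝 (1 : G)).basis_sets).ge_iff.2 fun U hU ↦
      mem_of_superset hU (subset_mul_left U (by simpa using mem_of_mem_nhds hU))
  refine (le_iff_nhds _ _).2 fun x ↦ ?_
  rw [GroupFilterBasis.nhds_eq, GroupFilterBasis.N, ← map_mul_left_nhds_one_of_continuousMul x]
  exact map_mono hle

theorem exists_nhds_one_notMem_mul_inv [T2Space G] {x : G} (hx : x ≠ 1) :
    ∃ U ∈ 𝓝 (1 : G), x ∉ U * U⁻¹ := by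
  have hdisj : Disjoint (map (x * ·) (𝓝 1)) (𝓝 (1 : G)) := by
    rw [map_mul_left_nhds_one_of_continuousMul]
    exact disjoint_nhds_nhds.2 hx
  obtain ⟨A, hA, B, hB, hAB⟩ := Filter.disjoint_iff.1 hdisj
  refine ⟨(x * ·) ⁻¹' A ∩ B, inter_mem hA hB, ?_⟩
  rintro ⟨u, hu, v, hv, huv⟩
  have huA : u ∈ A := by simpa [← huv] using hv.1
  exact disjoint_left.1 hAB huA hu.2

end Saturated

/-- If `(G, τ)` is a Hausdorff saturated first-countable paratopological group
(saturated: for every neighborhood `U` of the identity, `U⁻¹` has nonempty interior),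
then `G` is submetrizable: there is a metrizable topology on `G` coarser than `τ`. -/
theorem hausdorff_saturated_firstCountable_paratopological_group_submetrizable
    {G : Type*} [Group G] [t : TopologicalSpace G] [T2Space G] [ContinuousMul G]
    [FirstCountableTopology G]
    (hsat : ∀ U ∈ 𝓝 (1 : G), (interior U⁻¹).Nonempty) :
    ∃ t' : TopologicalSpace G, t ≤ t' ∧ @TopologicalSpace.MetrizableSpace G t' := by
  obtain ⟨U, hU⟩ := (𝓝 (1 : G)).exists_antitone_basis
  have := (mulInvGroupFilterBasis_filter_hasBasis hsat hU.toHasBasis).isCountablyGenerated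
  refine ⟨_, le_mulInvGroupFilterBasis_topology hsat,
    (mulInvGroupFilterBasis hsat).metrizableSpace_topology fun x hx ↦ ?_⟩
  obtain ⟨V, hV, hxV⟩ := exists_nhds_one_notMem_mul_inv hx
  exact ⟨_, mem_image_of_mem _ hV, hxV⟩
end

section
/- Let (G, τ) be a Hausdorff SIN paratopological group. If G is locally countable (i.e., the identity has a countable open neighborhood), then G is submetrizable. -/
/-!
Hausdorffness gives, for each `g ≠ 1`, a neighbourhood `A_g` of `1` with `g ∉ A_g A_g⁻¹`. If `U` is
a countable neighbourhood of `1`, the countably many sets `U ∩ A_g`, `g ∈ U U⁻¹`, already separate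
every `g ≠ 1` from `1` in this sense. The SIN property lets one shrink them to a sequence of
neighbourhoods `B_n = C_n C_n⁻¹` with `B_{n+1}² ⊆ B_n` and `x B_{n+1} x⁻¹ ⊆ B_n`. These form a base
at `1` of a group topology that is coarser than the given one, first countable and Hausdorff,
hence metrizable by the Birkhoff–Kakutani theorem.
-/

open Topology Filter Set Uniformity
open scoped Pointwise

theorem IsTopologicalGroup.metrizableSpace {G : Type*} [Group G] [TopologicalSpace G]
    [IsTopologicalGroup G] [T0Space G] [(𝓝 (1 : G)).IsCountablyGenerated] :
    TopologicalSpace.MetrizableSpace G := by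
  let := IsTopologicalGroup.rightUniformSpace G
  have : (𝓤 G).IsCountablyGenerated := Filter.comap.isCountablyGenerated _ _
  exact UniformSpace.metrizableSpace

/-- The conditions on a sequence of sets making it a neighbourhood basis of `1` for a group
topology (compare `GroupFilterBasis`). -/
structure IsGroupNhdsBasisSeq {G : Type*} [Group G] (B : ℕ → Set G) : Prop where
  one_mem : ∀ n, (1 : G) ∈ B n
  inv_subset : ∀ n, (B n)⁻¹ ⊆ B n
  mul_subset : ∀ n, B (n + 1) * B (n + 1) ⊆ B n
  conj_mem : ∀ x : G, ∀ n, ∀ b ∈ B (n + 1), x * b * x⁻¹ ∈ B n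

namespace IsGroupNhdsBasisSeq

variable {G : Type*} [Group G] {B : ℕ → Set G}

theorem antitone (h : IsGroupNhdsBasisSeq B) : Antitone B :=
  antitone_nat_of_succ_le fun n => (subset_mul_left _ (h.one_mem _)).trans (h.mul_subset n)

@[reducible]
def groupFilterBasis (h : IsGroupNhdsBasisSeq B) : GroupFilterBasis G where
  sets := range B
  nonempty := range_nonempty B
  inter_sets := by
    rintro _ _ ⟨m, rfl⟩ ⟨n, rfl⟩
    exact ⟨B (max m n), mem_range_self _,
      subset_inter (h.antitone (le_max_left m n)) (h.antitone (le_max_right m n))⟩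
  one' := by
    rintro _ ⟨n, rfl⟩
    exact h.one_mem n
  mul' := by
    rintro _ ⟨n, rfl⟩
    exact ⟨B (n + 1), mem_range_self _, h.mul_subset n⟩
  inv' := by
    rintro _ ⟨n, rfl⟩
    exact ⟨B n, mem_range_self _, fun x hx => h.inv_subset n (inv_mem_inv.mpr hx)⟩
  conj' := by
    rintro x _ ⟨n, rfl⟩
    exact ⟨B (n + 1), mem_range_self _, h.conj_mem x n⟩

theorem hasBasis_nhds_one (h : IsGroupNhdsBasisSeq B) :
    (@nhds G h.groupFilterBasis.topology 1).HasBasis (fun _ => True) B := by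
  refine h.groupFilterBasis.nhds_one_hasBasis.to_hasBasis ?_
    fun n _ => ⟨B n, mem_range_self n, subset_rfl⟩
  rintro _ ⟨n, rfl⟩
  exact ⟨n, trivial, subset_rfl⟩

theorem le_topology [t : TopologicalSpace G] [ContinuousMul G] (h : IsGroupNhdsBasisSeq B)
    (hB : ∀ n, B n ∈ 𝓝 1) : t ≤ h.groupFilterBasis.topology := by
  refine (le_iff_nhds _ _).mpr fun x => (h.groupFilterBasis.nhds_hasBasis x).ge_iff.mpr ?_
  rintro _ ⟨n, rfl⟩
  have hmap : map (x * ·) (𝓝 1) = 𝓝 x := by simpa using (Homeomorph.mulLeft x).map_nhds_eq 1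
  exact hmap ▸ image_mem_map (hB n)

theorem metrizableSpace (h : IsGroupNhdsBasisSeq B) (hsep : ∀ g, (∀ n, g ∈ B n) → g = 1) :
    @TopologicalSpace.MetrizableSpace G h.groupFilterBasis.topology := by
  let := h.groupFilterBasis.topology
  have : (𝓝 (1 : G)).IsCountablyGenerated := h.hasBasis_nhds_one.isCountablyGenerated
  have : T2Space G := IsTopologicalGroup.t2Space_of_one_sep fun g hg => by
    obtain ⟨n, hn⟩ : ∃ n, g ∉ B n := by
      by_contra! hall
      exact hg (hsep g hall)
    exact ⟨B n, h.hasBasis_nhds_one.mem_of_mem trivial, hn⟩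
  exact IsTopologicalGroup.metrizableSpace

end IsGroupNhdsBasisSeq

section Paratopological

variable {G : Type*} [Group G] [TopologicalSpace G] [ContinuousMul G]

theorem exists_nhds_one_notMem_div_self [T2Space G] {g : G} (hg : g ≠ 1) :
    ∃ A ∈ 𝓝 (1 : G), g ∉ A / A := by
  obtain ⟨P, hP, R, hR, hPR⟩ := Filter.disjoint_iff.mp (disjoint_nhds_nhds.mpr hg)
  have hgP : (g * ·) ⁻¹' P ∈ 𝓝 (1 : G) :=
    (continuous_const_mul g).continuousAt.preimage_mem_nhds (by rwa [mul_one])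
  refine ⟨(g * ·) ⁻¹' P ∩ R, inter_mem hgP hR, ?_⟩
  rintro ⟨a, ⟨-, haR⟩, b, ⟨hbP, -⟩, hab⟩
  have : g * b = a := by rw [← hab, div_mul_cancel]
  exact hPR.ne_of_mem (this ▸ hbP) haR rfl

theorem exists_seq_nhds_one_eq_one_of_forall_mem_div_self [T2Space G] {U : Set G}
    (hU : U ∈ 𝓝 (1 : G)) (hUc : U.Countable) :
    ∃ W : ℕ → Set G, (∀ n, W n ∈ 𝓝 (1 : G)) ∧ ∀ g, (∀ n, g ∈ W n / W n) → g = 1 := by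
  have hA : ∀ g : G, ∃ A ∈ 𝓝 (1 : G), g ≠ 1 → g ∉ A / A := fun g => by
    by_cases hg : g = 1
    · exact ⟨univ, univ_mem, fun h => (h hg).elim⟩
    · obtain ⟨A, hA, hgA⟩ := exists_nhds_one_notMem_div_self hg
      exact ⟨A, hA, fun _ => hgA⟩
  choose A hA hgA using hA
  obtain ⟨e, he⟩ := (hUc.image2 hUc (· / ·)).exists_eq_range
    ⟨1, 1, mem_of_mem_nhds hU, 1, mem_of_mem_nhds hU, div_one 1⟩
  refine ⟨fun n => U ∩ A (e n), fun n => inter_mem hU (hA (e n)), fun g hg => ?_⟩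
  -- only the countably many `g ∈ U / U` need to be separated from `1`
  obtain ⟨m, rfl⟩ : g ∈ range e := he ▸ div_subset_div inter_subset_left inter_subset_left (hg 0)
  by_contra hne
  exact hgA _ hne (div_subset_div inter_subset_right inter_subset_right (hg m))

theorem exists_nhds_one_div_self_mul_div_self_subset
    (hSIN : ∀ U ∈ 𝓝 (1 : G), ∃ V ∈ 𝓝 (1 : G), ∀ x : G, ∀ v ∈ V, x * v * x⁻¹ ∈ U)
    {K : Set G} (hK : K ∈ 𝓝 (1 : G)) :
    ∃ D ∈ 𝓝 (1 : G), D / D * (D / D) ⊆ K / K ∧ ∀ x : G, ∀ p ∈ D / D, x * p * x⁻¹ ∈ K / K := by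
  obtain ⟨E, hE, hEE⟩ := exists_nhds_one_split hK
  have hEK : E ⊆ K := fun x hx => by simpa using hEE x hx 1 (mem_of_mem_nhds hE)
  obtain ⟨V, hV, hVE⟩ := hSIN E hE
  refine ⟨V ∩ E, inter_mem hV hE, ?_, ?_⟩
  · rintro _ ⟨_, ⟨a, ⟨haV, haE⟩, b, ⟨-, hbE⟩, rfl⟩, _, ⟨c, ⟨hcV, -⟩, d, ⟨-, hdE⟩, rfl⟩, rfl⟩
    -- `a b⁻¹ c d⁻¹ = (a (b⁻¹ c b)) (d b)⁻¹`, and `b⁻¹ c b ∈ E` by the choice of `V`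
    refine ⟨a * (b⁻¹ * c * b⁻¹⁻¹), hEE _ haE _ (hVE b⁻¹ c hcV), d * b, hEE _ hdE _ hbE, ?_⟩
    simp only [div_eq_mul_inv]
    group
  · rintro x _ ⟨a, ⟨haV, -⟩, b, ⟨hbV, -⟩, rfl⟩
    refine ⟨x * a * x⁻¹, hEK (hVE x a haV), x * b * x⁻¹, hEK (hVE x b hbV), ?_⟩
    simp only [div_eq_mul_inv]
    group

theorem exists_isGroupNhdsBasisSeq_subset_div_self
    (hSIN : ∀ U ∈ 𝓝 (1 : G), ∃ V ∈ 𝓝 (1 : G), ∀ x : G, ∀ v ∈ V, x * v * x⁻¹ ∈ U)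
    {W : ℕ → Set G} (hW : ∀ n, W n ∈ 𝓝 (1 : G)) :
    ∃ B : ℕ → Set G, IsGroupNhdsBasisSeq B ∧ (∀ n, B n ∈ 𝓝 (1 : G)) ∧
      ∀ n, B (n + 1) ⊆ W n / W n := by
  choose! D hD hDmul hDconj using
    fun K (hK : K ∈ 𝓝 (1 : G)) => exists_nhds_one_div_self_mul_div_self_subset hSIN hK
  let C : ℕ → Set G := fun n => Nat.rec univ (fun n c => D (c ∩ W n)) n
  have hC : ∀ n, C n ∈ 𝓝 (1 : G) := fun n =>
    Nat.rec univ_mem (fun n ih => hD _ (inter_mem ih (hW n))) n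
  have hone : ∀ n, (1 : G) ∈ C n / C n := fun n =>
    ⟨1, mem_of_mem_nhds (hC n), 1, mem_of_mem_nhds (hC n), div_one 1⟩
  have hmul : ∀ n,
      C (n + 1) / C (n + 1) * (C (n + 1) / C (n + 1)) ⊆ (C n ∩ W n) / (C n ∩ W n) := fun n =>
    hDmul _ (inter_mem (hC n) (hW n))
  refine ⟨fun n => C n / C n,
    ⟨hone, fun n => (inv_div _ _).subset, fun n => ?_, fun x n p hp => ?_⟩,
    fun n => mem_of_superset (hC n) fun p hp => ⟨p, hp, 1, mem_of_mem_nhds (hC n), div_one p⟩,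
    fun n => ?_⟩
  · exact (hmul n).trans (div_subset_div inter_subset_left inter_subset_left)
  · exact div_subset_div inter_subset_left inter_subset_left
      (hDconj _ (inter_mem (hC n) (hW n)) x p hp)
  · exact (subset_mul_left _ (hone (n + 1))).trans
      ((hmul n).trans (div_subset_div inter_subset_right inter_subset_right))

end Paratopological

/-- Let `(G, τ)` be a Hausdorff SIN paratopological group. If `G` is locally countable
(the identity has a countable open neighborhood), then `G` is submetrizable:
there is a metrizable topology on `G` coarser than `τ`. -/
theorem hausdorff_SIN_locallyCountable_paratopological_group_submetrizable
    {G : Type*} [Group G] [t : TopologicalSpace G] [T2Space G] [ContinuousMul G]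
    (hSIN : ∀ U ∈ 𝓝 (1 : G), ∃ V ∈ 𝓝 (1 : G), ∀ x : G, ∀ v ∈ V, x * v * x⁻¹ ∈ U)
    (hloc : ∃ U : Set G, IsOpen U ∧ (1 : G) ∈ U ∧ U.Countable) :
    ∃ t' : TopologicalSpace G, t ≤ t' ∧ @TopologicalSpace.MetrizableSpace G t' := by
  obtain ⟨U, hUo, hU1, hUc⟩ := hloc
  obtain ⟨W, hW, hWsep⟩ :=
    exists_seq_nhds_one_eq_one_of_forall_mem_div_self (hUo.mem_nhds hU1) hUc
  obtain ⟨B, hB, hBnhds, hBW⟩ := exists_isGroupNhdsBasisSeq_subset_div_self hSIN hW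
  refine ⟨hB.groupFilterBasis.topology, hB.le_topology hBnhds, hB.metrizableSpace fun g hg => ?_⟩
  exact hWsep g fun n => hBW n (hg (n + 1))
end
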